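/- arXiv:0710.2911 — 4 statements merged into one kernel-verified Lean document; each statement's English description precedes it below -/
import Mathlib

section
/- For every natural number n ≥ 1 and every real n×n matrix A with |det A| ≥ 1, the squared Frobenius norm satisfies ∑_{i,j} a_{ij}² ≥ n, and equality holds if and only if A is orthogonal, i.e. AᵀA = I. -/
/-!
`AᵀA` is positive definite with eigenvalues `λᵢ > 0`, trace `∑ i j, aᵢⱼ²` and determinant
`∏ λᵢ = (det A)² ≥ 1`. Summing `log λ ≤ λ - 1`, which is strict unless `λ = 1`, gives
`0 ≤ ∑ log λᵢ ≤ ∑ λᵢ - n`, with equality only if every `λᵢ = 1`, i.e. `AᵀA = 1`.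
-/

open Matrix Finset

namespace Real

variable {ι : Type*} {s : Finset ι} {x : ι → ℝ}

lemma sum_log_nonneg_of_one_le_prod (hx : ∀ i ∈ s, 0 < x i) (h : 1 ≤ ∏ i ∈ s, x i) :
    0 ≤ ∑ i ∈ s, log (x i) := by
  rw [← log_prod fun i hi ↦ (hx i hi).ne']
  exact log_nonneg h

lemma card_le_sum_of_one_le_prod (hx : ∀ i ∈ s, 0 < x i) (h : 1 ≤ ∏ i ∈ s, x i) :
    (#s : ℝ) ≤ ∑ i ∈ s, x i := by
  have hlog : ∑ i ∈ s, log (x i) ≤ ∑ i ∈ s, (x i - 1) :=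
    sum_le_sum fun i hi ↦ log_le_sub_one_of_pos (hx i hi)
  have := sum_log_nonneg_of_one_le_prod hx h
  rw [sum_sub_distrib, sum_const, nsmul_one] at hlog
  linarith

lemma eq_one_of_sum_eq_card_of_one_le_prod (hx : ∀ i ∈ s, 0 < x i) (h : 1 ≤ ∏ i ∈ s, x i)
    (hsum : ∑ i ∈ s, x i = #s) : ∀ i ∈ s, x i = 1 := by
  by_contra! ⟨j, hj, hne⟩
  have hlog : ∑ i ∈ s, log (x i) < ∑ i ∈ s, (x i - 1) :=
    sum_lt_sum (fun i hi ↦ log_le_sub_one_of_pos (hx i hi))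
      ⟨j, hj, log_lt_sub_one_of_pos (hx j hj) hne⟩
  have := sum_log_nonneg_of_one_le_prod hx h
  rw [sum_sub_distrib, sum_const, nsmul_one, hsum] at hlog
  linarith

end Real

namespace Matrix

lemma sum_sum_sq_eq_trace_transpose_mul {m n R : Type*} [Fintype m] [Fintype n] [CommSemiring R]
    (A : Matrix m n R) : ∑ i, ∑ j, A i j ^ 2 = (Aᵀ * A).trace := by
  simp only [trace, diag, mul_apply, transpose_apply, sq]
  exact sum_comm

variable {n : Type*} [Fintype n] [DecidableEq n]

lemma IsHermitian.eq_one_of_eigenvalues_eq_one {𝕜 : Type*} [RCLike 𝕜] {B : Matrix n n 𝕜}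
    (hB : B.IsHermitian) (h : ∀ i, hB.eigenvalues i = 1) : B = 1 := by
  have hdiag : (RCLike.ofReal ∘ hB.eigenvalues : n → 𝕜) = 1 := funext fun i ↦ by simp [h i]
  rw [hB.spectral_theorem, hdiag, Pi.one_def, diagonal_one, map_one]

namespace PosDef

variable {B : Matrix n n ℝ}

lemma one_le_prod_eigenvalues (hB : B.PosDef) (hdet : 1 ≤ B.det) :
    1 ≤ ∏ i, hB.1.eigenvalues i := by
  simpa [hB.1.det_eq_prod_eigenvalues] using hdet

lemma card_le_trace_of_one_le_det (hB : B.PosDef) (hdet : 1 ≤ B.det) :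
    (Fintype.card n : ℝ) ≤ B.trace := by
  rw [hB.1.trace_eq_sum_eigenvalues]
  simpa using Real.card_le_sum_of_one_le_prod (fun i _ ↦ hB.eigenvalues_pos i)
    (hB.one_le_prod_eigenvalues hdet)

lemma trace_eq_card_iff_of_one_le_det (hB : B.PosDef) (hdet : 1 ≤ B.det) :
    B.trace = Fintype.card n ↔ B = 1 := by
  refine ⟨fun htr ↦ hB.1.eq_one_of_eigenvalues_eq_one fun i ↦ ?_, fun h ↦ by simp [h]⟩
  rw [hB.1.trace_eq_sum_eigenvalues] at htr
  exact Real.eq_one_of_sum_eq_card_of_one_le_prod (fun i _ ↦ hB.eigenvalues_pos i)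
    (hB.one_le_prod_eigenvalues hdet) (by simpa using htr) i (mem_univ i)

end PosDef

lemma card_le_sum_sum_sq_of_one_le_abs_det {A : Matrix n n ℝ} (hA : 1 ≤ |A.det|) :
    (Fintype.card n : ℝ) ≤ ∑ i, ∑ j, A i j ^ 2 ∧
      (∑ i, ∑ j, A i j ^ 2 = Fintype.card n ↔ Aᵀ * A = 1) := by
  have hunit : IsUnit A := (isUnit_iff_isUnit_det A).2 <| isUnit_iff_ne_zero.2 <| by
    rintro h; simp [h] at hA; linarith
  have hpos : (Aᵀ * A).PosDef := by
    simpa using PosDef.conjTranspose_mul_self A (mulVec_injective_iff_isUnit.2 hunit)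
  have hdet : 1 ≤ (Aᵀ * A).det := by
    rw [det_mul, det_transpose, ← sq, ← sq_abs]
    exact one_le_pow₀ hA
  rw [sum_sum_sq_eq_trace_transpose_mul]
  exact ⟨hpos.card_le_trace_of_one_le_det hdet, hpos.trace_eq_card_iff_of_one_le_det hdet⟩

end Matrix

theorem frobenius_sq_ge_of_abs_det_ge_one_general
    (n : ℕ) (A : Matrix (Fin n) (Fin n) ℝ) (hA : 1 ≤ |A.det|) :
    (n : ℝ) ≤ ∑ i, ∑ j, (A i j) ^ 2 ∧
      ((∑ i, ∑ j, (A i j) ^ 2) = (n : ℝ) ↔ Aᵀ * A = 1) := by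
  simpa using card_le_sum_sum_sq_of_one_le_abs_det hA

/-- For every `n ≥ 1` and every real `n × n` matrix `A` with `|det A| ≥ 1`, the squared
Frobenius norm `∑ i j, (A i j)^2` is at least `n`, with equality iff `A` is orthogonal
(`Aᵀ * A = 1`). -/
theorem frobenius_sq_ge_of_abs_det_ge_one
    (n : ℕ) (hn : 1 ≤ n) (A : Matrix (Fin n) (Fin n) ℝ) (hA : 1 ≤ |A.det|) :
    (n : ℝ) ≤ ∑ i, ∑ j, (A i j) ^ 2 ∧
      ((∑ i, ∑ j, (A i j) ^ 2) = (n : ℝ) ↔ Aᵀ * A = 1) :=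
  frobenius_sq_ge_of_abs_det_ge_one_general n A hA
end

section
/- Let n, k ≥ 1, let A be a real n×n matrix with det A ≥ 1, and let R be a real n×k matrix. If ∑_{i,j} a_{ij}² + ∑_{i,s} r_{is}² = n, then AᵀA = I (so A is special orthogonal, det A = 1) and R = 0. -/
open Matrix

/-- If `A` is a real `n × n` matrix with `det A ≥ 1`, `R` a real `n × k` matrix, and
`‖A‖² + ‖R‖² = n` (squared Frobenius norms), then `AᵀA = 1` (so `det A = 1`) and `R = 0`. -/
theorem special_orthogonal_of_frobenius_sq_eq
    (n k : ℕ) (hn : 1 ≤ n) (hk : 1 ≤ k)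
    (A : Matrix (Fin n) (Fin n) ℝ) (hA : 1 ≤ A.det)
    (R : Matrix (Fin n) (Fin k) ℝ)
    (h : (∑ i, ∑ j, (A i j) ^ 2) + (∑ i, ∑ s, (R i s) ^ 2) = (n : ℝ)) :
    Aᵀ * A = 1 ∧ A.det = 1 ∧ R = 0 := by
  classical
  have hconj : Aᴴ = Aᵀ := by ext i j; simp [conjTranspose_apply]
  have hB : (Aᵀ * A).PosSemidef := by
    have := Matrix.posSemidef_conjTranspose_mul_self A
    rwa [hconj] at this
  have hHerm : (Aᵀ * A).IsHermitian := hB.1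
  set μ : Fin n → ℝ := hHerm.eigenvalues with hμdef
  have hμ0 : ∀ i, 0 ≤ μ i := hB.eigenvalues_nonneg
  set U : Matrix (Fin n) (Fin n) ℝ := (hHerm.eigenvectorUnitary : Matrix (Fin n) (Fin n) ℝ)
    with hUdef
  have hUU : U * star U = 1 :=
    (Matrix.mem_unitaryGroup_iff).mp hHerm.eigenvectorUnitary.2
  have hUU' : star U * U = 1 :=
    (Matrix.mem_unitaryGroup_iff').mp hHerm.eigenvectorUnitary.2
  have hspec : Aᵀ * A = U * Matrix.diagonal (RCLike.ofReal ∘ μ) * star U :=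
    hHerm.spectral_theorem
  -- trace of AᵀA equals sum of eigenvalues
  have htr1 : (Aᵀ * A).trace = ∑ i, μ i := by
    rw [hspec, Matrix.trace_mul_cycle, hUU', Matrix.one_mul]
    simp [Matrix.trace_diagonal]
  -- trace of AᵀA equals the squared Frobenius norm of A
  have htr2 : (Aᵀ * A).trace = ∑ i, ∑ j, (A i j) ^ 2 := by
    rw [Finset.sum_comm]
    simp [Matrix.trace, Matrix.mul_apply, Matrix.diag, sq]
  -- det AᵀA equals product of eigenvalues
  have hdet : ∏ i, μ i = A.det ^ 2 := by
    have := hHerm.det_eq_prod_eigenvalues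
    simp only [RCLike.ofReal_real_eq_id, id] at this
    rw [Matrix.det_mul, Matrix.det_transpose] at this
    rw [← this]; ring
  have hprod1 : (1 : ℝ) ≤ ∏ i, μ i := by rw [hdet]; nlinarith
  have hR0 : 0 ≤ ∑ i, ∑ s, (R i s) ^ 2 :=
    Finset.sum_nonneg fun i _ => Finset.sum_nonneg fun s _ => sq_nonneg _
  have hsumle : ∑ i, μ i ≤ (n : ℝ) := by
    rw [← htr1, htr2] at *; linarith
  -- all eigenvalues are positive
  have hμpos : ∀ i, 0 < μ i := by
    intro i
    rcases lt_or_eq_of_le (hμ0 i) with h' | h'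
    · exact h'
    · exfalso
      have : ∏ j, μ j = 0 := Finset.prod_eq_zero (Finset.mem_univ i) h'.symm
      linarith
  -- key: all eigenvalues equal 1
  have key : ∀ i, μ i = 1 := by
    by_contra hcon
    push_neg at hcon
    obtain ⟨j, hj⟩ := hcon
    have hle : ∀ i ∈ Finset.univ, μ i ≤ Real.exp (μ i - 1) := fun i _ => by
      have := Real.add_one_le_exp (μ i - 1); linarith
    have hlt : μ j < Real.exp (μ j - 1) := by
      have := Real.add_one_lt_exp (sub_ne_zero.2 hj); linarith
    have hstrict : ∏ i, μ i < ∏ i, Real.exp (μ i - 1) :=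
      Finset.prod_lt_prod (fun i _ => hμpos i) hle ⟨j, Finset.mem_univ j, hlt⟩
    have hexp : ∏ i, Real.exp (μ i - 1) = Real.exp (∑ i, μ i - n) := by
      rw [← Real.exp_sum]
      congr 1
      rw [Finset.sum_sub_distrib]
      simp
    have : Real.exp (∑ i, μ i - n) ≤ 1 := by
      rw [show (1 : ℝ) = Real.exp 0 by simp]
      exact Real.exp_le_exp.mpr (by linarith)
    rw [hexp] at hstrict
    linarith
  -- AᵀA = 1
  have hId : Aᵀ * A = 1 := by
    rw [hspec]
    have hfun : (RCLike.ofReal ∘ μ : Fin n → ℝ) = fun _ => 1 := by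
      funext i; simp [key i]
    have : Matrix.diagonal (RCLike.ofReal ∘ μ) = (1 : Matrix (Fin n) (Fin n) ℝ) := by
      rw [hfun, Matrix.diagonal_one]
    rw [this, Matrix.mul_one, hUU]
  refine ⟨hId, ?_, ?_⟩
  · have : A.det ^ 2 = 1 := by
      rw [← hdet]
      simp [key]
    nlinarith
  · -- R = 0
    have hsum : ∑ i, μ i = (n : ℝ) := by simp [key]
    have hRzero : ∑ i, ∑ s, (R i s) ^ 2 = 0 := by
      rw [← htr1, htr2] at hsum; linarith
    ext i s
    have h2 := (Finset.sum_eq_zero_iff_of_nonneg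
      (fun i _ => Finset.sum_nonneg fun s _ => sq_nonneg (R i s))).mp hRzero i
      (Finset.mem_univ i)
    have h3 := (Finset.sum_eq_zero_iff_of_nonneg
      (fun s _ => sq_nonneg (R i s))).mp h2 s (Finset.mem_univ s)
    exact pow_eq_zero_iff two_ne_zero |>.mp h3
end

section
/- Let n ≥ 1 and consider the smooth function f(A) = ∑_{i,j} a_{ij}² (the squared Frobenius norm) restricted to the Lie group SL(n,ℝ) of real n×n matrices of determinant 1. Then A ∈ SL(n,ℝ) is a critical point of f (i.e. the manifold derivative of f at A vanishes) if and only if A ∈ SO(n); in particular n is the only critical value of f on SL(n,ℝ), it is the minimum value of f, and f(A) = n exactly when A ∈ SO(n). -/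
/-!
Write `f(B) = ∑ i j, B i j ^ 2 = tr (Bᵀ B)`. For `det B = 1` the eigenvalues `λᵢ` of `Bᵀ B` are
positive with `∏ λᵢ = 1`, so summing `λᵢ - 1 - log λᵢ ≥ 0` gives `f(B) ≥ n`, with equality iff every
`λᵢ = 1`, i.e. `Bᵀ B = 1`. Orthogonal matrices are therefore minima of `f` on `SL(n,ℝ)`, hence
critical points.

Conversely, along a curve `t ↦ P(t) A` with `P(t) ∈ SL(n,ℝ)`, `P(0) = 1`, `P'(0) = X`, the derivative
of `f` at `0` is `2 tr (X A Aᵀ)`. Transvections (`X = E_ji`) and traceless diagonal scalings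
(`X = E_ii - E_jj`) show that at a critical point `A Aᵀ` is a scalar matrix `c • 1`; then
`c ^ n = det (A Aᵀ) = 1` and `c ≥ 0` force `c = 1`.
-/

open Matrix

section AMGM

variable {ι : Type*} [Fintype ι] {z : ι → ℝ}

lemma sum_sub_one_sub_log_eq (hz : ∀ i, 0 < z i) (hprod : ∏ i, z i = 1) :
    ∑ i, (z i - 1 - Real.log (z i)) = ∑ i, z i - Fintype.card ι := by
  have hlog : ∑ i, Real.log (z i) = 0 := by
    rw [← Real.log_prod fun i _ => (hz i).ne', hprod, Real.log_one]
  simp [Finset.sum_sub_distrib, hlog]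

lemma card_le_sum_of_prod_eq_one (hz : ∀ i, 0 < z i) (hprod : ∏ i, z i = 1) :
    (Fintype.card ι : ℝ) ≤ ∑ i, z i := by
  have hnonneg := Finset.sum_nonneg fun i (_ : i ∈ Finset.univ) =>
    sub_nonneg.2 (Real.log_le_sub_one_of_pos (hz i))
  linarith [sum_sub_one_sub_log_eq hz hprod]

lemma sum_eq_card_iff_of_prod_eq_one (hz : ∀ i, 0 < z i) (hprod : ∏ i, z i = 1) :
    ∑ i, z i = Fintype.card ι ↔ ∀ i, z i = 1 := by
  refine ⟨fun hsum i => ?_, fun h => by simp [h]⟩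
  have hzero := (Finset.sum_eq_zero_iff_of_nonneg fun i _ =>
    sub_nonneg.2 (Real.log_le_sub_one_of_pos (hz i))).1
    (by rw [sum_sub_one_sub_log_eq hz hprod, hsum, sub_self]) i (Finset.mem_univ i)
  by_contra hne
  linarith [Real.log_lt_sub_one_of_pos (hz i) hne]

end AMGM

namespace Matrix

section Frobenius

variable {m ι : Type*} [Fintype m] [Fintype ι]

lemma sum_sq_entries_eq_trace_transpose_mul (B : Matrix m ι ℝ) :
    ∑ i, ∑ j, B i j ^ 2 = (Bᵀ * B).trace := by
  simp only [trace, diag, mul_apply, transpose_apply, sq]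
  exact Finset.sum_comm

lemma hasDerivAt_sum_sq_entries {γ : ℝ → Matrix m ι ℝ} {γ' : Matrix m ι ℝ} {t : ℝ}
    (h : ∀ i j, HasDerivAt (fun t => γ t i j) (γ' i j) t) :
    HasDerivAt (fun t => ∑ i, ∑ j, γ t i j ^ 2) (2 * (γ' * (γ t)ᵀ).trace) t := by
  refine (HasDerivAt.fun_sum fun i _ => HasDerivAt.fun_sum fun j _ =>
    (h i j).fun_pow 2).congr_deriv ?_
  simp only [trace, diag_apply, mul_apply, transpose_apply, Finset.mul_sum]
  exact Finset.sum_congr rfl fun i _ => Finset.sum_congr rfl fun j _ => by push_cast; ring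

end Frobenius

variable {ι : Type*} [Fintype ι] [DecidableEq ι]

section Minimum

lemma IsHermitian.eq_one_of_eigenvalues_eq_one_s2 {M : Matrix ι ι ℝ} (hM : M.IsHermitian)
    (h : ∀ i, hM.eigenvalues i = 1) : M = 1 := by
  have : diagonal (RCLike.ofReal ∘ hM.eigenvalues) = (1 : Matrix ι ι ℝ) := by
    simp [show hM.eigenvalues = 1 from funext h]
  rw [hM.spectral_theorem, this, map_one]

variable {M : Matrix ι ι ℝ}

lemma PosSemidef.eigenvalues_pos_of_det_eq_one (hM : M.PosSemidef) (hdet : M.det = 1) (i : ι) :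
    0 < hM.isHermitian.eigenvalues i :=
  (hM.posDef_iff_det_ne_zero.2 (by simp [hdet])).eigenvalues_pos i

lemma PosSemidef.prod_eigenvalues_of_det_eq_one (hM : M.PosSemidef) (hdet : M.det = 1) :
    ∏ i, hM.isHermitian.eigenvalues i = 1 := by
  simpa [hdet] using hM.isHermitian.det_eq_prod_eigenvalues.symm

lemma PosSemidef.card_le_trace_of_det_eq_one (hM : M.PosSemidef) (hdet : M.det = 1) :
    (Fintype.card ι : ℝ) ≤ M.trace := by
  simpa [hM.isHermitian.trace_eq_sum_eigenvalues] using
    card_le_sum_of_prod_eq_one (hM.eigenvalues_pos_of_det_eq_one hdet)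
      (hM.prod_eigenvalues_of_det_eq_one hdet)

lemma PosSemidef.trace_eq_card_iff_of_det_eq_one (hM : M.PosSemidef) (hdet : M.det = 1) :
    M.trace = Fintype.card ι ↔ M = 1 := by
  refine ⟨fun htr => hM.isHermitian.eq_one_of_eigenvalues_eq_one_s2 ?_, fun h => by simp [h]⟩
  refine (sum_eq_card_iff_of_prod_eq_one (hM.eigenvalues_pos_of_det_eq_one hdet)
    (hM.prod_eigenvalues_of_det_eq_one hdet)).1 ?_
  simpa [hM.isHermitian.trace_eq_sum_eigenvalues] using htr

variable {B : Matrix ι ι ℝ}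

lemma det_transpose_mul_self_of_det_eq_one (hB : B.det = 1) : (Bᵀ * B).det = 1 := by
  rw [det_mul, det_transpose, hB, one_mul]

lemma card_le_sum_sq_entries_of_det_eq_one (hB : B.det = 1) :
    (Fintype.card ι : ℝ) ≤ ∑ i, ∑ j, B i j ^ 2 := by
  simpa [sum_sq_entries_eq_trace_transpose_mul] using
    (posSemidef_conjTranspose_mul_self B).card_le_trace_of_det_eq_one
      (det_transpose_mul_self_of_det_eq_one hB)

lemma sum_sq_entries_eq_card_iff_of_det_eq_one (hB : B.det = 1) :
    ∑ i, ∑ j, B i j ^ 2 = Fintype.card ι ↔ Bᵀ * B = 1 := by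
  simpa [sum_sq_entries_eq_trace_transpose_mul] using
    (posSemidef_conjTranspose_mul_self B).trace_eq_card_iff_of_det_eq_one
      (det_transpose_mul_self_of_det_eq_one hB)

end Minimum

section Critical

def IsCriticalPointOnSL (f : Matrix ι ι ℝ → ℝ) (A : Matrix ι ι ℝ) : Prop :=
  ∀ γ : ℝ → Matrix ι ι ℝ, (∀ t, (γ t).det = 1) → γ 0 = A →
    (∀ i j, DifferentiableAt ℝ (fun t => γ t i j) 0) → deriv (fun t => f (γ t)) 0 = 0

lemma isCriticalPointOnSL_of_forall_le {f : Matrix ι ι ℝ → ℝ} {A : Matrix ι ι ℝ}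
    (h : ∀ B : Matrix ι ι ℝ, B.det = 1 → f A ≤ f B) : IsCriticalPointOnSL f A :=
  fun γ hγ hγ0 _ => IsLocalMin.deriv_eq_zero <| .of_forall fun t => by simpa [hγ0] using h _ (hγ t)

variable {A : Matrix ι ι ℝ}
  (hA : IsCriticalPointOnSL (fun M => ∑ i, ∑ j, M i j ^ 2) A) (hAdet : A.det = 1)
include hA hAdet

lemma IsCriticalPointOnSL.trace_mul_mul_transpose_eq_zero
    {P : ℝ → Matrix ι ι ℝ} {X : Matrix ι ι ℝ} (hP : ∀ t, (P t).det = 1) (hP0 : P 0 = 1)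
    (hX : ∀ i j, HasDerivAt (fun t => P t i j) (X i j) 0) :
    (X * (A * Aᵀ)).trace = 0 := by
  have hγ : ∀ i j, HasDerivAt (fun t => (P t * A) i j) ((X * A) i j) 0 := fun i j =>
    HasDerivAt.fun_sum fun k _ => (hX i k).mul_const (A k j)
  have hcrit := hA (fun t => P t * A) (fun t => by rw [det_mul, hP, hAdet, one_mul])
    (by rw [hP0, one_mul]) fun i j => (hγ i j).differentiableAt
  rw [(hasDerivAt_sum_sq_entries hγ).deriv, hP0, one_mul, Matrix.mul_assoc] at hcrit
  simpa using hcrit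

lemma IsCriticalPointOnSL.mul_transpose_apply_eq_zero {i j : ι} (hij : i ≠ j) :
    (A * Aᵀ) i j = 0 := by
  have hX : ∀ k l, HasDerivAt (fun t => transvection j i t k l) (single j i (1 : ℝ) k l) 0 := by
    intro k l
    simp only [transvection, add_apply, single_apply]
    split_ifs
    · simpa using (hasDerivAt_id (0 : ℝ)).const_add _
    · simpa using hasDerivAt_const (0 : ℝ) _
  simpa [trace_single_mul] using hA.trace_mul_mul_transpose_eq_zero hAdet
    (det_transvection_of_ne j i hij.symm) (by simp) hX

lemma IsCriticalPointOnSL.mul_transpose_apply_self_eq (i j : ι) :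
    (A * Aᵀ) i i = (A * Aᵀ) j j := by
  set c : ι → ℝ := Pi.single i 1 - Pi.single j 1
  have hc : ∑ k, c k = 0 := by simp [c]
  have hP : ∀ t, (diagonal fun k => Real.exp (t * c k)).det = 1 := fun t => by
    rw [det_diagonal, ← Real.exp_sum, ← Finset.mul_sum, hc, mul_zero, Real.exp_zero]
  have hX : ∀ k l, HasDerivAt (fun t => diagonal (fun k => Real.exp (t * c k)) k l)
      (diagonal c k l) 0 := by
    intro k l
    by_cases hkl : k = l
    · subst hkl
      simpa using ((hasDerivAt_id (0 : ℝ)).mul_const (c k)).exp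
    · simpa [hkl] using hasDerivAt_const (0 : ℝ) (0 : ℝ)
  have htrace := hA.trace_mul_mul_transpose_eq_zero hAdet hP (by simp) hX
  simp only [trace, diag_apply, diagonal_mul, Pi.sub_apply, Pi.single_apply, sub_mul, ite_mul,
    one_mul, zero_mul, Finset.sum_sub_distrib, Finset.sum_ite_eq', Finset.mem_univ, if_true,
    c] at htrace
  exact sub_eq_zero.1 htrace

lemma IsCriticalPointOnSL.mul_transpose_eq_one [Nonempty ι] : A * Aᵀ = 1 := by
  obtain ⟨i₀⟩ := ‹Nonempty ι›
  set c := (A * Aᵀ) i₀ i₀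
  have hscalar : A * Aᵀ = c • 1 := by
    ext i j
    rcases eq_or_ne i j with rfl | hij
    · simp [c, hA.mul_transpose_apply_self_eq hAdet i i₀]
    · simp [hA.mul_transpose_apply_eq_zero hAdet hij, hij]
  have hpow : c ^ Fintype.card ι = 1 := by
    simpa [hscalar, hAdet] using det_mul A Aᵀ
  have hc : c = 1 :=
    (pow_eq_one_iff_of_nonneg ((posSemidef_self_mul_conjTranspose A).diag_nonneg)
      Fintype.card_ne_zero).1 hpow
  rw [hscalar, hc, one_smul]

end Critical

end Matrix

/-- The squared Frobenius norm `f(A) = ∑ i j, (A i j)^2` restricted to `SL(n,ℝ)`: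
`A` is a critical point of `f` (the derivative of `f` along any differentiable curve in
`SL(n,ℝ)` through `A` vanishes) iff `A ∈ SO(n)`; moreover `n` is the minimum value of `f`
on `SL(n,ℝ)`, attained exactly on `SO(n)`. -/
theorem frobenius_sq_critical_iff_orthogonal
    (n : ℕ) (hn : 1 ≤ n) (A : Matrix (Fin n) (Fin n) ℝ) (hA : A.det = 1) :
    ((∀ γ : ℝ → Matrix (Fin n) (Fin n) ℝ,
        (∀ t, (γ t).det = 1) → γ 0 = A →
        (∀ i j, DifferentiableAt ℝ (fun t => γ t i j) 0) →
        deriv (fun t => ∑ i, ∑ j, (γ t i j) ^ 2) 0 = 0)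
      ↔ Aᵀ * A = 1) ∧
    (∀ B : Matrix (Fin n) (Fin n) ℝ, B.det = 1 → (n : ℝ) ≤ ∑ i, ∑ j, (B i j) ^ 2) ∧
    ((∑ i, ∑ j, (A i j) ^ 2) = (n : ℝ) ↔ Aᵀ * A = 1) := by
  have hmin : ∀ B : Matrix (Fin n) (Fin n) ℝ, B.det = 1 → (n : ℝ) ≤ ∑ i, ∑ j, B i j ^ 2 :=
    fun B hB => by simpa using card_le_sum_sq_entries_of_det_eq_one hB
  have hminimizer : (∑ i, ∑ j, A i j ^ 2) = (n : ℝ) ↔ Aᵀ * A = 1 := by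
    simpa using sum_sq_entries_eq_card_iff_of_det_eq_one hA
  have : Nonempty (Fin n) := ⟨⟨0, hn⟩⟩
  refine ⟨⟨fun hcrit => ?_, fun hO => ?_⟩, hmin, hminimizer⟩
  · exact mul_eq_one_comm.1 (IsCriticalPointOnSL.mul_transpose_eq_one hcrit hA)
  · exact isCriticalPointOnSL_of_forall_le (f := fun M => ∑ i, ∑ j, M i j ^ 2)
      fun B hB => hminimizer.2 hO ▸ hmin B hB
end

section
/- Let 𝔤 be a finite-dimensional real simple Lie algebra of dimension n whose Killing form B is negative definite, and let g₀ := −B, an inner product on 𝔤. Let g be an inner product on 𝔤 with g ≠ g₀, let {X₁,…,X_n} be a g₀-orthonormal basis and {Y₁,…,Y_n} a g-orthonormal basis of 𝔤, write Y_j = ∑_i a_{ij} X_i, and assume |det(a_{ij})| ≥ 1 (this expresses vol(g) ≤ vol(g₀)). Set C := (∑_{i,j} a_{ij}²)/n. Then C > 1, and for every finite-dimensional real inner product space V and every nonzero Lie algebra homomorphism φ : 𝔤 → End(V) with all φ(X) skew-adjoint, one has −∑_{j=1}^n Tr(φ(Y_j) ∘ φ(Y_j)) = C · (−∑_{i=1}^n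 Tr(φ(X_i) ∘ φ(X_i))). In particular the constant C > 1 depends only on g and not on (V, φ). -/
open scoped RealInnerProductSpace

attribute [local instance 100] LieRing.ofAssociativeRing

/-!
The trace form `F(Z, W) = Tr(φ Z ∘ φ W)` of a representation is an invariant symmetric form on
`𝔤`. Relative to the inner product `g₀ = -B` it has an eigenvector `x ≠ 0`, say with eigenvalue
`μ`; the radical of the invariant form `F - μ g₀` is an ideal containing `x`, hence all of `𝔤`.
So `F = μ g₀`, and the two sums are `μ` times the traces of the `g₀`-Gram matrices of the two
bases, namely `n` and `Tr(AᵀA) = ∑ a_{ij}²`. Finally `C > 1` is AM–GM for the eigenvalues of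
`AᵀA`, whose product is `det(A)² ≥ 1`: equality would force `AᵀA = 1`, i.e. `g = g₀`.
-/

open Matrix

theorem Real.card_lt_sum_of_one_le_prod {ι : Type*} [Fintype ι] (t : ι → ℝ) (ht : ∀ i, 0 ≤ t i)
    (hprod : 1 ≤ ∏ i, t i) (hne : t ≠ 1) : (Fintype.card ι : ℝ) < ∑ i, t i := by
  have hpos : ∀ i, 0 < t i := fun i ↦ (ht i).lt_of_ne fun h ↦ by
    rw [Finset.prod_eq_zero (Finset.mem_univ i) h.symm] at hprod
    linarith
  obtain ⟨i₀, hi₀⟩ := Function.ne_iff.mp hne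
  have hlog : 0 ≤ ∑ i, Real.log (t i) := by
    rw [← Real.log_prod fun i _ ↦ (hpos i).ne']
    exact Real.log_nonneg hprod
  -- `log t ≤ t - 1`, strictly unless `t = 1`
  have hlt : ∑ i, (Real.log (t i) + 1) < ∑ i, t i :=
    Finset.sum_lt_sum (fun i _ ↦ by linarith [Real.log_le_sub_one_of_pos (hpos i)])
      ⟨i₀, Finset.mem_univ _, by linarith [Real.log_lt_sub_one_of_pos (hpos i₀) hi₀]⟩
  simp only [Finset.sum_add_distrib, Finset.sum_const, Finset.card_univ, nsmul_eq_mul,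
    mul_one] at hlt
  linarith

theorem Matrix.IsHermitian.eq_one_of_eigenvalues_eq_one_s8 {𝕜 n : Type*} [RCLike 𝕜] [Fintype n]
    [DecidableEq n] {M : Matrix n n 𝕜} (hM : M.IsHermitian) (h : hM.eigenvalues = 1) : M = 1 := by
  rw [hM.spectral_theorem, h]
  simp

theorem Matrix.trace_transpose_mul_self {m n R : Type*} [Fintype m] [Fintype n] [Semiring R]
    (A : Matrix m n R) : (Aᵀ * A).trace = ∑ i, ∑ j, A i j ^ 2 := by
  simp only [trace, diag, mul_apply, transpose_apply, sq]
  exact Finset.sum_comm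

theorem Matrix.card_lt_sum_sq_of_one_le_abs_det {n : Type*} [Fintype n] [DecidableEq n]
    (A : Matrix n n ℝ) (hdet : 1 ≤ |A.det|) (hA : Aᵀ * A ≠ 1) :
    (Fintype.card n : ℝ) < ∑ i, ∑ j, A i j ^ 2 := by
  have hM : (Aᵀ * A).IsHermitian := by simpa using isHermitian_conjTranspose_mul_self A
  rw [← trace_transpose_mul_self, hM.trace_eq_sum_eigenvalues]
  refine Real.card_lt_sum_of_one_le_prod _ (fun i ↦ ?_) ?_ (mt hM.eq_one_of_eigenvalues_eq_one_s8 hA)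
  · simpa using (posSemidef_conjTranspose_mul_self A).eigenvalues_nonneg i
  · have hprod : A.det * A.det = ∏ i, hM.eigenvalues i := by
      simpa using hM.det_eq_prod_eigenvalues
    simp only [RCLike.ofReal_real_eq_id, id, ← hprod, ← abs_mul_abs_self A.det]
    nlinarith

open LinearMap (BilinForm)

namespace LinearMap.BilinForm

theorem apply_sum_smul_eq_transpose_mul {R M κ ι : Type*} [CommSemiring R] [AddCommMonoid M]
    [Module R M] [Fintype κ] [DecidableEq κ] (G : BilinForm R M) (X : κ → M)
    (hX : ∀ k l, G (X k) (X l) = if k = l then 1 else 0) (A : Matrix κ ι R) (i j : ι) :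
    G (∑ k, A k i • X k) (∑ k, A k j • X k) = (Aᵀ * A) i j := by
  simp [map_sum, mul_apply, hX, Finset.sum_apply, mul_comm]

theorem IsSymm.exists_flip_eq_smul_flip {M ι : Type*} [AddCommGroup M] [Module ℝ M] [Fintype ι]
    [DecidableEq ι] [Nonempty ι] {F : BilinForm ℝ M} (hF : F.IsSymm) (G : BilinForm ℝ M)
    (X : Module.Basis ι ℝ M) (hX : ∀ i j, G (X i) (X j) = if i = j then 1 else 0) :
    ∃ x ≠ 0, ∃ μ : ℝ, F.flip x = μ • G.flip x := by
  let S : Matrix ι ι ℝ := Matrix.of fun i j ↦ F (X i) (X j)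
  have hS : S.IsHermitian := by ext i j; exact hF.eq _ _
  let i₀ := Classical.arbitrary ι
  let v := (hS.eigenvectorBasis i₀).ofLp
  have hv : S *ᵥ v = hS.eigenvalues i₀ • v := hS.mulVec_eigenvectorBasis i₀
  refine ⟨X.equivFun.symm v, ?_, hS.eigenvalues i₀, X.ext fun k ↦ ?_⟩
  · exact X.equivFun.symm.map_ne_zero_iff.mpr <|
      (WithLp.ofLp_eq_zero 2).ne.mpr <| hS.eigenvectorBasis.orthonormal.ne_zero i₀
  · simpa [S, mulVec, dotProduct, hX, mul_comm] using congrFun hv k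

end LinearMap.BilinForm

namespace LieAlgebra.IsSimple

theorem eq_smul_of_flip_eq_smul_flip {K L : Type*} [Field K] [LieRing L] [LieAlgebra K L]
    [IsSimple K L] {F G : BilinForm K L} (hF : F.lieInvariant L)
    (hG : G.lieInvariant L) {x : L} (hx : x ≠ 0) {c : K} (hxc : F.flip x = c • G.flip x) :
    F = c • G := by
  have hΦ : (F - c • G).lieInvariant L := fun u y z ↦ by
    simp only [LinearMap.sub_apply, LinearMap.smul_apply, hF u, hG u, smul_eq_mul]
    ring
  -- `x` lies in the radical of `F - c • G`, which is an ideal, hence all of `L`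
  have hrad : InvariantForm.orthogonal _ hΦ ⊤ = ⊤ := by
    refine (eq_bot_or_eq_top _).resolve_left fun hbot ↦ hx ?_
    have hmem : x ∈ InvariantForm.orthogonal _ hΦ ⊤ := by
      refine (InvariantForm.mem_orthogonal _ hΦ ⊤ x).mpr fun w _ ↦ ?_
      have hw := LinearMap.congr_fun hxc w
      simp only [BilinForm.flip_apply, LinearMap.smul_apply, smul_eq_mul] at hw
      simp [hw]
    rwa [hbot, LieSubmodule.mem_bot] at hmem
  ext y z
  have hz : z ∈ InvariantForm.orthogonal _ hΦ ⊤ := by rw [hrad]; exact LieSubmodule.mem_top z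
  have hyz := (InvariantForm.mem_orthogonal _ hΦ ⊤ z).mp hz y trivial
  simpa [sub_eq_zero] using hyz

theorem exists_eq_smul_of_isSymm {L ι : Type*} [LieRing L] [LieAlgebra ℝ L] [IsSimple ℝ L]
    [Fintype ι] [DecidableEq ι] {F G : BilinForm ℝ L} (hF : F.lieInvariant L) (hFs : F.IsSymm)
    (hG : G.lieInvariant L) (X : Module.Basis ι ℝ L)
    (hX : ∀ i j, G (X i) (X j) = if i = j then 1 else 0) : ∃ c : ℝ, F = c • G := by
  have : Nontrivial L := nontrivial ℝ (L := L)
  have : Nonempty ι := X.index_nonempty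
  obtain ⟨x, hx, c, hxc⟩ := hFs.exists_flip_eq_smul_flip G X hX
  exact ⟨c, eq_smul_of_flip_eq_smul_flip hF hG hx hxc⟩

end LieAlgebra.IsSimple

theorem trace_laplacian_ratio_const_of_simple_general
    (L : Type*) [LieRing L] [LieAlgebra ℝ L] [FiniteDimensional ℝ L]
    [LieAlgebra.IsSimple ℝ L]
    (g : LinearMap.BilinForm ℝ L)
    (hgne : g ≠ -(killingForm ℝ L))
    (n : ℕ) (X Y : Module.Basis (Fin n) ℝ L)
    (hX : ∀ i j, -(killingForm ℝ L (X i) (X j)) = if i = j then 1 else 0)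
    (hY : ∀ i j, g (Y i) (Y j) = if i = j then 1 else 0)
    (A : Matrix (Fin n) (Fin n) ℝ)
    (hA : ∀ j, Y j = ∑ i, A i j • X i)
    (hdet : 1 ≤ |A.det|)
    (C : ℝ) (hC : C = (∑ i, ∑ j, (A i j) ^ 2) / n) :
    1 < C ∧
      ∀ (V : Type) [NormedAddCommGroup V] [InnerProductSpace ℝ V] [FiniteDimensional ℝ V]
        (φ : L →ₗ⁅ℝ⁆ Module.End ℝ V), φ ≠ 0 →
        (∀ (Z : L) (v w : V), ⟪φ Z v, w⟫ = -⟪v, φ Z w⟫) →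
        -(∑ j, LinearMap.trace ℝ V ((φ (Y j)) ∘ₗ (φ (Y j)))) =
          C * (-(∑ i, LinearMap.trace ℝ V ((φ (X i)) ∘ₗ (φ (X i))))) := by
  have hn : (0 : ℝ) < n := by
    have : Nontrivial L := LieAlgebra.IsSimple.nontrivial ℝ (L := L)
    exact_mod_cast Fin.pos_iff_nonempty.mpr X.index_nonempty
  have hg₀ : (-killingForm ℝ L).lieInvariant L := fun u y z ↦ by
    simp [LieModule.traceForm_lieInvariant ℝ L L u y z]
  have hgram : ∀ i j, -killingForm ℝ L (Y i) (Y j) = (Aᵀ * A) i j := fun i j ↦ by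
    rw [hA, hA]
    exact BilinForm.apply_sum_smul_eq_transpose_mul (-killingForm ℝ L) X hX A i j
  refine ⟨?_, fun V _ _ _ φ _ _ ↦ ?_⟩
  · have hAA : Aᵀ * A ≠ 1 := fun h ↦ hgne <| Y.ext fun i ↦ Y.ext fun j ↦ by
      rw [hY, LinearMap.neg_apply, LinearMap.neg_apply, hgram, h, one_apply]
    rw [hC, one_lt_div hn]
    simpa using A.card_lt_sum_sq_of_one_le_abs_det hdet hAA
  · let _ := LieRingModule.compLieHom V φ
    let _ := LieModule.compLieHom V φ
    obtain ⟨c, hc⟩ := LieAlgebra.IsSimple.exists_eq_smul_of_isSymm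
      (LieModule.traceForm_lieInvariant ℝ L V)
      (BilinForm.isSymm_iff.mpr (LieModule.traceForm_isSymm ℝ L V)) hg₀ X hX
    have htr : ∀ Z, LinearMap.trace ℝ V (φ Z ∘ₗ φ Z) = c * -killingForm ℝ L Z Z := fun Z ↦
      congr($hc Z Z)
    have hS : ∑ j, (Aᵀ * A) j j = ∑ i, ∑ j, A i j ^ 2 := A.trace_transpose_mul_self
    simp only [htr, hgram, hX, ← Finset.mul_sum, hS, if_true, Finset.sum_const,
      Finset.card_univ, Fintype.card_fin, nsmul_eq_mul, mul_one, hC]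
    field_simp

/-- Algebraic content of Proposition 3.1: let `𝔤` be a real simple Lie algebra with
negative-definite Killing form `B`, `g₀ = −B`, and `g ≠ g₀` another inner product on `𝔤`.
Let `{Xᵢ}` be a `g₀`-orthonormal basis, `{Yⱼ}` a `g`-orthonormal basis, `Yⱼ = ∑ᵢ aᵢⱼ Xᵢ`,
and assume `|det A| ≥ 1` (i.e. `vol(g) ≤ vol(g₀)`). Set `C = ‖A‖²/n`. Then `C > 1` and
for every nonzero skew-adjoint representation `φ` of `𝔤` on a finite-dimensional real
inner product space `V`, `−∑ⱼ Tr(φ(Yⱼ)²) = C · (−∑ᵢ Tr(φ(Xᵢ)²))`. -/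
theorem trace_laplacian_ratio_const_of_simple
    (L : Type*) [LieRing L] [LieAlgebra ℝ L] [FiniteDimensional ℝ L]
    [LieAlgebra.IsSimple ℝ L]
    (hB : ∀ x : L, x ≠ 0 → killingForm ℝ L x x < 0)
    (g : LinearMap.BilinForm ℝ L)
    (hgsymm : ∀ x y, g x y = g y x) (hgpos : ∀ x : L, x ≠ 0 → 0 < g x x)
    (hgne : g ≠ -(killingForm ℝ L))
    (n : ℕ) (X Y : Module.Basis (Fin n) ℝ L)
    (hX : ∀ i j, -(killingForm ℝ L (X i) (X j)) = if i = j then 1 else 0)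
    (hY : ∀ i j, g (Y i) (Y j) = if i = j then 1 else 0)
    (A : Matrix (Fin n) (Fin n) ℝ)
    (hA : ∀ j, Y j = ∑ i, A i j • X i)
    (hdet : 1 ≤ |A.det|)
    (C : ℝ) (hC : C = (∑ i, ∑ j, (A i j) ^ 2) / n) :
    1 < C ∧
      ∀ (V : Type) [NormedAddCommGroup V] [InnerProductSpace ℝ V] [FiniteDimensional ℝ V]
        (φ : L →ₗ⁅ℝ⁆ Module.End ℝ V), φ ≠ 0 →
        (∀ (Z : L) (v w : V), ⟪φ Z v, w⟫ = -⟪v, φ Z w⟫) →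
        -(∑ j, LinearMap.trace ℝ V ((φ (Y j)) ∘ₗ (φ (Y j)))) =
          C * (-(∑ i, LinearMap.trace ℝ V ((φ (X i)) ∘ₗ (φ (X i))))) :=
  trace_laplacian_ratio_const_of_simple_general L g hgne n X Y hX hY A hA hdet C hC
end
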